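/- arXiv:2408.02449 — 5 statements merged into one kernel-verified Lean document; each statement's English description precedes it below -/
import Mathlib

section
/- Let λ ∈ ℝ and μ > 0. There exists a constant C > 0 (depending only on λ and μ) such that for all real a with |a| ≥ 1, ∫₀¹ s^λ φ(a/s^μ) ds ≤ C a^{-2} φ(a). -/
/-!
Writing `s = e^{-t}`, the integrand is `φ(a) · exp(-λt - a²(e^{2μt} - 1)/2)`.
Since `e^{2μt} - 1 ≥ 2μt + 2μ²t²` and `a² ≥ 1`, half of the Gaussian factor absorbs `e^{-λt}`
(the term `μ²t²/2` beats `λt` up to the constant `λ²/(2μ²)`), while the other half still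
decays like `exp(-a²μt/2) ≤ exp(a²μ(s - 1)/2)`. Integrating the latter over `[0, 1]` gives
`2/(a²μ)`.
-/

open MeasureTheory

noncomputable def phi (a : ℝ) : ℝ := (Real.sqrt (2 * Real.pi))⁻¹ * Real.exp (-a ^ 2 / 2)

open Real Set

lemma rpow_mul_phi_div_rpow_eq (lam μ a : ℝ) {s : ℝ} (hs : 0 < s) :
    s ^ lam * phi (a / s ^ μ) =
      phi a * exp (lam * log s - a ^ 2 * (exp (-(2 * μ * log s)) - 1) / 2) := by
  have hsq : (a / s ^ μ) ^ 2 = a ^ 2 * exp (-(2 * μ * log s)) := by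
    rw [div_pow, rpow_def_of_pos hs, ← exp_nat_mul, exp_neg, div_eq_mul_inv]
    push_cast; ring_nf
  rw [phi, phi, hsq, rpow_def_of_pos hs, mul_left_comm, ← exp_add, mul_assoc (√(2 * π))⁻¹,
    ← exp_add]
  ring_nf

lemma neg_mul_sub_mul_exp_sub_one_le (lam μ a : ℝ) (hμ : 0 < μ) (ha : 1 ≤ a ^ 2) {t : ℝ}
    (ht : 0 ≤ t) :
    -(lam * t) - a ^ 2 * (exp (2 * μ * t) - 1) / 2 ≤
      lam ^ 2 / (2 * μ ^ 2) - a ^ 2 * μ * t / 2 := by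
  have hexp := quadratic_le_exp_of_nonneg (by positivity : 0 ≤ 2 * μ * t)
  have hamgm : -(lam * t) ≤ μ ^ 2 * t ^ 2 / 2 + lam ^ 2 / (2 * μ ^ 2) := by
    have : 0 ≤ (μ ^ 2 * t + lam) ^ 2 / (2 * μ ^ 2) := by positivity
    have h : (μ ^ 2 * t + lam) ^ 2 / (2 * μ ^ 2) =
        μ ^ 2 * t ^ 2 / 2 + lam * t + lam ^ 2 / (2 * μ ^ 2) := by
      field_simp; ring
    linarith
  have hsq_ge : 0 ≤ (a ^ 2 - 1) * (exp (2 * μ * t) - 1) :=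
    mul_nonneg (by linarith) (by nlinarith [mul_nonneg hμ.le ht])
  have hlin_ge : 0 ≤ a ^ 2 * (exp (2 * μ * t) - 1 - 2 * μ * t) :=
    mul_nonneg (by positivity) (by nlinarith)
  nlinarith

lemma integral_exp_mul_sub_one_le {b : ℝ} (hb : 0 < b) :
    ∫ s in (0:ℝ)..1, exp (b * (s - 1)) ≤ b⁻¹ := by
  have h := intervalIntegral.integral_comp_mul_sub (a := 0) (b := 1) exp hb.ne' b
  simp only [mul_sub, mul_one, mul_zero, zero_sub, sub_self, integral_exp, exp_zero] at h ⊢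
  rw [h, smul_eq_mul]
  have := exp_pos (-b)
  exact mul_le_of_le_one_right (inv_nonneg.2 hb.le) (by linarith)

lemma rpow_mul_phi_div_rpow_le (lam μ a : ℝ) (hμ : 0 < μ) (ha : 1 ≤ a ^ 2) {s : ℝ}
    (hs : s ∈ Ioc 0 1) :
    s ^ lam * phi (a / s ^ μ) ≤
      exp (lam ^ 2 / (2 * μ ^ 2)) * phi a * exp (a ^ 2 * μ / 2 * (s - 1)) := by
  have ht : 0 ≤ -log s := neg_nonneg.2 (log_nonpos hs.1.le hs.2)
  have hlog : 1 - s ≤ -log s := by linarith [log_le_sub_one_of_pos hs.1]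
  have h := neg_mul_sub_mul_exp_sub_one_le lam μ a hμ ha ht
  have hphi : 0 ≤ phi a := by unfold phi; positivity
  rw [rpow_mul_phi_div_rpow_eq lam μ a hs.1, mul_comm (exp _), mul_assoc (phi a), ← exp_add]
  gcongr
  simp only [mul_neg, neg_neg] at h
  nlinarith [mul_le_mul_of_nonneg_left hlog (by positivity : 0 ≤ a ^ 2 * μ)]

/-- For `λ ∈ ℝ`, `μ > 0`, there is `C > 0` such that for all `|a| ≥ 1`,
`∫₀¹ s^λ φ(a/s^μ) ds ≤ C a^{-2} φ(a)`. -/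
theorem stmt_1 (lam μ : ℝ) (hμ : 0 < μ) :
    ∃ C > 0, ∀ a : ℝ, 1 ≤ |a| →
      (∫ s in (0:ℝ)..1, s ^ lam * phi (a / s ^ μ)) ≤ C * (a ^ 2)⁻¹ * phi a := by
  set K := exp (lam ^ 2 / (2 * μ ^ 2))
  refine ⟨2 * K / μ, by positivity, fun a ha => ?_⟩
  have ha2 : 1 ≤ a ^ 2 := by nlinarith [sq_abs a]
  have hb : 0 < a ^ 2 * μ / 2 := by positivity
  have hphi : 0 ≤ phi a := by unfold phi; positivity
  calc ∫ s in (0:ℝ)..1, s ^ lam * phi (a / s ^ μ)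
      ≤ ∫ s in (0:ℝ)..1, K * phi a * exp (a ^ 2 * μ / 2 * (s - 1)) := by
        simp only [intervalIntegral.integral_of_le zero_le_one]
        refine setIntegral_mono_of_nonneg (fun s hs => ?_)
          (fun s hs => rpow_mul_phi_div_rpow_le lam μ a hμ ha2 hs) ?_
        · have := rpow_pos_of_pos hs.1 lam
          unfold phi; positivity
        · exact Continuous.integrableOn_Ioc (by fun_prop)
    _ = K * phi a * ∫ s in (0:ℝ)..1, exp (a ^ 2 * μ / 2 * (s - 1)) :=
        intervalIntegral.integral_const_mul _ _
    _ ≤ K * phi a * (a ^ 2 * μ / 2)⁻¹ := by gcongr; exact integral_exp_mul_sub_one_le hb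
    _ = 2 * K / μ * (a ^ 2)⁻¹ * phi a := by field_simp
end

section
/- There exists a constant C > 0 (depending only on H, C_H, α) such that for every integer n ≥ 2, ∑_{k=2}^{n} (t_k^{H(t_k)} − t_k^{H(t_{k-1})})² / t_{k-1}^{H(t_{k-1})} ≤ C n^{1−2α}. -/
/-!
With `t = t_k`, `s = t_{k-1}`, `a = H(t)`, `b = H(s)`, the mean value theorem for `u ↦ t ^ u`
bounds the numerator by `t ^ (2 Hmin) (a - b)² log² t`, and `log² t ≤ t ^ (-2ε) / ε²` with
`2 Hmin - 2ε = Hmax` (possible because `Hmax < 1 < 2 Hmin`). Since `t ≤ 2 s`, the denominator is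
at least `t ^ Hmax / 2`, so each summand is `O((a - b)²) = O(n ^ (-2α))` by the Hölder bound, and
there are fewer than `n` summands.
-/

open Finset

lemma abs_rpow_sub_rpow_le_of_le_one {x a b m : ℝ} (hx : 0 < x) (hx1 : x ≤ 1)
    (hma : m ≤ a) (hmb : m ≤ b) :
    |x ^ a - x ^ b| ≤ x ^ m * |a - b| * -Real.log x := by
  wlog hba : b ≤ a generalizing a b
  · rw [abs_sub_comm, abs_sub_comm a b]; exact this hmb hma (le_of_not_ge hba)
  have hfactor : x ^ b - x ^ a = x ^ b * (1 - x ^ (a - b)) := by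
    rw [mul_sub, mul_one, ← Real.rpow_add hx, add_sub_cancel]
  -- `1 - x ^ d ≤ -d log x` is `1 + y ≤ exp y` at `y = d log x`
  have hexp : 1 - x ^ (a - b) ≤ (a - b) * -Real.log x := by
    have := Real.add_one_le_exp (Real.log x * (a - b))
    rw [← Real.rpow_def_of_pos hx] at this
    linarith
  have hle : x ^ a ≤ x ^ b := Real.rpow_le_rpow_of_exponent_ge hx hx1 hba
  rw [abs_of_nonpos (sub_nonpos.2 hle), neg_sub, hfactor, abs_of_nonneg (sub_nonneg.2 hba),
    mul_assoc]
  exact mul_le_mul (Real.rpow_le_rpow_of_exponent_ge hx hx1 hmb) hexp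
    (sub_nonneg.2 (Real.rpow_le_one hx.le hx1 (sub_nonneg.2 hba))) (by positivity)

lemma neg_log_le_rpow_neg_div {x ε : ℝ} (hx : 0 < x) (hε : 0 < ε) :
    -Real.log x ≤ x ^ (-ε) / ε := by
  have h := Real.log_le_rpow_div (x := x⁻¹) (by positivity) hε
  rwa [Real.log_inv, Real.inv_rpow hx.le, ← Real.rpow_neg hx.le] at h

lemma sq_rpow_sub_rpow_le {x a b m ε : ℝ} (hx : 0 < x) (hx1 : x ≤ 1)
    (hma : m ≤ a) (hmb : m ≤ b) (hε : 0 < ε) :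
    (x ^ a - x ^ b) ^ 2 ≤ x ^ (2 * (m - ε)) * ((a - b) ^ 2 / ε ^ 2) := by
  have habs : |x ^ a - x ^ b| ≤ x ^ (m - ε) * (|a - b| / ε) := by
    calc |x ^ a - x ^ b| ≤ x ^ m * |a - b| * -Real.log x :=
          abs_rpow_sub_rpow_le_of_le_one hx hx1 hma hmb
      _ ≤ x ^ m * |a - b| * (x ^ (-ε) / ε) := by
          gcongr; exact neg_log_le_rpow_neg_div hx hε
      _ = x ^ (m - ε) * (|a - b| / ε) := by
          rw [Real.rpow_sub hx, Real.rpow_neg hx.le]; ring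
  calc (x ^ a - x ^ b) ^ 2 = |x ^ a - x ^ b| ^ 2 := (sq_abs _).symm
    _ ≤ (x ^ (m - ε) * (|a - b| / ε)) ^ 2 := by gcongr
    _ = x ^ (2 * (m - ε)) * ((a - b) ^ 2 / ε ^ 2) := by
        rw [two_mul, Real.rpow_add hx, mul_pow, div_pow, sq_abs]; ring

lemma rpow_div_two_le_rpow {s t b M : ℝ} (hs : 0 < s) (hs1 : s ≤ 1) (ht : 0 ≤ t) (hts : t ≤ 2 * s)
    (hbM : b ≤ M) (hM0 : 0 ≤ M) (hM1 : M ≤ 1) :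
    t ^ M / 2 ≤ s ^ b := by
  have htwo : (2 : ℝ) ^ M ≤ 2 := by
    simpa using Real.rpow_le_rpow_of_exponent_le one_le_two hM1
  calc t ^ M / 2 ≤ t ^ M / 2 ^ M := by gcongr
    _ = (t / 2) ^ M := (Real.div_rpow ht zero_le_two M).symm
    _ ≤ s ^ M := by gcongr; linarith
    _ ≤ s ^ b := Real.rpow_le_rpow_of_exponent_ge hs hs1 hbM

lemma sq_rpow_sub_rpow_div_rpow_le {s t a b m M : ℝ} (hs : 0 < s) (hst : s ≤ t) (ht1 : t ≤ 1)
    (hts : t ≤ 2 * s) (hma : m ≤ a) (hmb : m ≤ b) (hbM : b ≤ M) (hM1 : M ≤ 1)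
    (hMm : M < 2 * m) :
    (t ^ a - t ^ b) ^ 2 / s ^ b ≤ 8 * (a - b) ^ 2 / (2 * m - M) ^ 2 := by
  have ht : 0 < t := hs.trans_le hst
  set ε := (2 * m - M) / 2 with hε
  have hεpos : 0 < ε := by linarith
  have hnum := sq_rpow_sub_rpow_le ht ht1 hma hmb hεpos
  rw [show 2 * (m - ε) = M by rw [hε]; ring] at hnum
  have hden := rpow_div_two_le_rpow hs (hst.trans ht1) ht.le hts hbM (by linarith) hM1
  have htM : 0 < t ^ M := Real.rpow_pos_of_pos ht M
  calc (t ^ a - t ^ b) ^ 2 / s ^ b ≤ t ^ M * ((a - b) ^ 2 / ε ^ 2) / (t ^ M / 2) :=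
        div_le_div₀ (by positivity) hnum (by positivity) hden
    _ = 8 * (a - b) ^ 2 / (2 * m - M) ^ 2 := by
        rw [hε]; field_simp; ring

lemma sum_Icc_two_le_mul_rpow {f : ℕ → ℝ} {c β : ℝ} {n : ℕ} (hn : 0 < n) (hc : 0 ≤ c)
    (hf : ∀ k ∈ Icc 2 n, f k ≤ c * (n : ℝ) ^ (-β)) :
    ∑ k ∈ Icc 2 n, f k ≤ c * (n : ℝ) ^ (1 - β) := by
  have hn' : (0 : ℝ) < n := Nat.cast_pos.2 hn
  have hcard : ((Icc 2 n).card : ℝ) ≤ n := by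
    rw [Nat.card_Icc]; exact_mod_cast Nat.sub_le_of_le_add (by omega)
  calc ∑ k ∈ Icc 2 n, f k ≤ (Icc 2 n).card • (c * (n : ℝ) ^ (-β)) := sum_le_card_nsmul _ _ _ hf
    _ ≤ n * (c * (n : ℝ) ^ (-β)) := by rw [nsmul_eq_mul]; gcongr
    _ = c * (n : ℝ) ^ (1 - β) := by
        rw [sub_eq_add_neg, Real.rpow_add hn', Real.rpow_one]; ring

lemma sq_sub_le_of_abs_sub_le_inv_rpow {u v c α x : ℝ} (hx : 0 < x)
    (h : |u - v| ≤ c * |x⁻¹| ^ α) :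
    (u - v) ^ 2 ≤ c ^ 2 * x ^ (-(2 * α)) := by
  rw [abs_inv, abs_of_pos hx, Real.inv_rpow hx.le, ← Real.rpow_neg hx.le] at h
  calc (u - v) ^ 2 ≤ (c * x ^ (-α)) ^ 2 := by rw [← sq_abs]; gcongr
    _ = c ^ 2 * x ^ (-(2 * α)) := by rw [mul_pow, ← Real.rpow_mul_natCast hx.le]; ring_nf

theorem stmt_2_general (H : ℝ → ℝ) (C_H α Hmin Hmax : ℝ)
    (hrange : ∀ t ∈ Set.Icc (0:ℝ) 1, H t ∈ Set.Ioo (1/2 : ℝ) 1)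
    (hmin : IsLeast (H '' Set.Icc (0:ℝ) 1) Hmin)
    (hmax : IsGreatest (H '' Set.Icc (0:ℝ) 1) Hmax)
    (hC_H : 0 < C_H)
    (hHolder : ∀ t ∈ Set.Icc (0:ℝ) 1, ∀ s ∈ Set.Icc (0:ℝ) 1,
      |H t - H s| ≤ C_H * |t - s| ^ α) :
    ∃ C > 0, ∀ n : ℕ, 2 ≤ n →
      ∑ k ∈ Finset.Icc 2 n,
        (((k : ℝ)/(n : ℝ)) ^ H ((k : ℝ)/(n : ℝ))
          - ((k : ℝ)/(n : ℝ)) ^ H (((k : ℝ) - 1)/(n : ℝ))) ^ 2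
          / ((((k : ℝ) - 1)/(n : ℝ)) ^ H (((k : ℝ) - 1)/(n : ℝ)))
      ≤ C * (n : ℝ) ^ (1 - 2 * α) := by
  obtain ⟨⟨t₀, ht₀, rfl⟩, hle_min⟩ := hmin
  obtain ⟨⟨t₁, ht₁, rfl⟩, hmax_le⟩ := hmax
  have hgap : H t₁ < 2 * H t₀ := by linarith [(hrange t₀ ht₀).1, (hrange t₁ ht₁).2]
  refine ⟨8 * C_H ^ 2 / (2 * H t₀ - H t₁) ^ 2, by have := sub_pos.2 hgap; positivity, ?_⟩
  intro n hn
  have hn' : (0 : ℝ) < n := by positivity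
  refine sum_Icc_two_le_mul_rpow (by omega) (by positivity) fun k hk => ?_
  obtain ⟨hk2, hkn⟩ := mem_Icc.1 hk
  have hk2' : (2 : ℝ) ≤ k := by exact_mod_cast hk2
  have hkn' : (k : ℝ) ≤ n := by exact_mod_cast hkn
  have hs : ((k : ℝ) - 1) / n ∈ Set.Icc (0 : ℝ) 1 :=
    ⟨div_nonneg (by linarith) hn'.le, (div_le_one hn').2 (by linarith)⟩
  have ht : (k : ℝ) / n ∈ Set.Icc (0 : ℝ) 1 := ⟨by positivity, (div_le_one hn').2 hkn'⟩
  have hstep : (k : ℝ) / n - (k - 1) / n = (n : ℝ)⁻¹ := by field_simp; ring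
  have hHolder_step := sq_sub_le_of_abs_sub_le_inv_rpow hn' (hstep ▸ hHolder _ ht _ hs)
  calc _ ≤ 8 * (H (k / n) - H ((k - 1) / n)) ^ 2 / (2 * H t₀ - H t₁) ^ 2 :=
        sq_rpow_sub_rpow_div_rpow_le (div_pos (by linarith) hn') (by gcongr; linarith)
          ht.2 (by rw [← mul_div_assoc, div_le_div_iff_of_pos_right hn']; linarith)
          (hle_min ⟨_, ht, rfl⟩) (hle_min ⟨_, hs, rfl⟩) (hmax_le ⟨_, hs, rfl⟩)
          (hrange t₁ ht₁).2.le hgap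
    _ ≤ 8 * (C_H ^ 2 * (n : ℝ) ^ (-(2 * α))) / (2 * H t₀ - H t₁) ^ 2 := by gcongr
    _ = _ := by ring

/-- For a Hurst function `H` on `[0,1]` taking values in `(1/2,1)`, with minimum `Hmin` and
maximum `Hmax`, which is `α`-Hölder with constant `C_H` for some `α ∈ (1/2,1]`, there is a
constant `C > 0` such that for every `n ≥ 2`,
`∑_{k=2}^{n} (t_k^{H(t_k)} − t_k^{H(t_{k-1})})² / t_{k-1}^{H(t_{k-1})} ≤ C n^{1−2α}`,
where `t_k = k/n`. -/
theorem stmt_2 (H : ℝ → ℝ) (C_H α Hmin Hmax : ℝ)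
    (hcont : ContinuousOn H (Set.Icc 0 1))
    (hrange : ∀ t ∈ Set.Icc (0:ℝ) 1, H t ∈ Set.Ioo (1/2 : ℝ) 1)
    (hmin : IsLeast (H '' Set.Icc (0:ℝ) 1) Hmin)
    (hmax : IsGreatest (H '' Set.Icc (0:ℝ) 1) Hmax)
    (hC_H : 0 < C_H) (hα : α ∈ Set.Ioc (1/2 : ℝ) 1)
    (hHolder : ∀ t ∈ Set.Icc (0:ℝ) 1, ∀ s ∈ Set.Icc (0:ℝ) 1,
      |H t - H s| ≤ C_H * |t - s| ^ α) :
    ∃ C > 0, ∀ n : ℕ, 2 ≤ n →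
      ∑ k ∈ Finset.Icc 2 n,
        (((k : ℝ)/(n : ℝ)) ^ H ((k : ℝ)/(n : ℝ))
          - ((k : ℝ)/(n : ℝ)) ^ H (((k : ℝ) - 1)/(n : ℝ))) ^ 2
          / ((((k : ℝ) - 1)/(n : ℝ)) ^ H (((k : ℝ) - 1)/(n : ℝ)))
      ≤ C * (n : ℝ) ^ (1 - 2 * α) :=
  stmt_2_general H C_H α Hmin Hmax hrange hmin hmax hC_H hHolder
end

section
/- There exists a constant C > 0 (depending only on H) such that for every integer n ≥ 2, ∑_{k=2}^{n} (t_k^{H(t_{k-1})} − t_{k-1}^{H(t_{k-1})})² / t_{k-1}^{H(t_{k-1})} ≤ C n^{−H_min}. -/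
/-!
Write `a = t_{k-1}`, `b = t_k` and `h = H(t_{k-1}) ∈ (0,1)`. Bernoulli's inequality
`(1 + x)^h ≤ 1 + h x` gives `b^h - a^h ≤ a^h (b - a)/a`, so the `k`-th term is at most
`a^h / (k-1)^2`. Since `a ≤ 1` and `h ≥ Hmin`, `a^h ≤ a^Hmin`, which turns the bound into
`(k-1)^(Hmin-2) n^(-Hmin)`; the series `∑ j^(Hmin-2)` converges because `Hmin < 1`.
-/

open Finset

namespace Real

theorem rpow_sub_rpow_le_mul_rpow_mul_div {a b h : ℝ} (ha : 0 < a) (hab : a ≤ b)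
    (h0 : 0 ≤ h) (h1 : h ≤ 1) : b ^ h - a ^ h ≤ h * a ^ h * ((b - a) / a) := by
  have hb : b = a * (1 + (b - a) / a) := by field_simp; ring
  have hx : 0 ≤ (b - a) / a := div_nonneg (by linarith) ha.le
  have hbern := rpow_one_add_le_one_add_mul_self (by linarith) h0 h1 (s := (b - a) / a)
  calc b ^ h - a ^ h = a ^ h * (1 + (b - a) / a) ^ h - a ^ h := by
        conv_lhs => rw [hb, mul_rpow ha.le (by linarith)]
    _ ≤ a ^ h * (1 + h * ((b - a) / a)) - a ^ h := by gcongr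
    _ = h * a ^ h * ((b - a) / a) := by ring

theorem sq_rpow_sub_rpow_div_rpow_le {a b h : ℝ} (ha : 0 < a) (hab : a ≤ b)
    (h0 : 0 ≤ h) (h1 : h ≤ 1) : (b ^ h - a ^ h) ^ 2 / a ^ h ≤ a ^ h * ((b - a) / a) ^ 2 := by
  have hah : 0 < a ^ h := rpow_pos_of_pos ha h
  have hx : 0 ≤ (b - a) / a := div_nonneg (by linarith) ha.le
  have hlow : 0 ≤ b ^ h - a ^ h := sub_nonneg.2 (rpow_le_rpow ha.le hab h0)
  have hup : b ^ h - a ^ h ≤ a ^ h * ((b - a) / a) := by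
    have := rpow_sub_rpow_le_mul_rpow_mul_div ha hab h0 h1
    nlinarith [mul_nonneg hah.le hx]
  rw [div_le_iff₀ hah]
  calc (b ^ h - a ^ h) ^ 2 ≤ (a ^ h * ((b - a) / a)) ^ 2 := pow_le_pow_left₀ hlow hup 2
    _ = a ^ h * ((b - a) / a) ^ 2 * a ^ h := by ring

end Real

theorem sum_Icc_comp_pred_le_tsum {f : ℕ → ℝ} (hf : Summable f) (hf0 : ∀ j, 0 ≤ f j)
    (a n : ℕ) : ∑ k ∈ Icc (a + 1) n, f (k - 1) ≤ ∑' j, f j := by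
  rw [← sum_image (g := (· - 1)) fun x hx y hy hxy => by
    simp only [coe_Icc, Set.mem_Icc] at hx hy hxy; omega]
  exact hf.sum_le_tsum _ fun j _ => hf0 j

theorem sq_rpow_div_sub_rpow_pred_div_div_le {k n h p : ℝ} (hk : 1 < k) (hkn : k ≤ n)
    (hph : p ≤ h) (h0 : 0 ≤ h) (h1 : h ≤ 1) :
    ((k / n) ^ h - ((k - 1) / n) ^ h) ^ 2 / ((k - 1) / n) ^ h
      ≤ (k - 1) ^ (p - 2) * n ^ (-p) := by
  have hm : 0 < k - 1 := by linarith
  have hn : 0 < n := by linarith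
  have ha : 0 < (k - 1) / n := div_pos hm hn
  have hab : (k - 1) / n ≤ k / n := by gcongr; linarith
  have hrel : (k / n - (k - 1) / n) / ((k - 1) / n) = 1 / (k - 1) := by field_simp; ring
  calc ((k / n) ^ h - ((k - 1) / n) ^ h) ^ 2 / ((k - 1) / n) ^ h
      ≤ ((k - 1) / n) ^ h * (1 / (k - 1)) ^ 2 := by
        simpa only [hrel] using Real.sq_rpow_sub_rpow_div_rpow_le ha hab h0 h1
    _ ≤ ((k - 1) / n) ^ p * (1 / (k - 1)) ^ 2 := by
        have ha1 : (k - 1) / n ≤ 1 := (div_le_one hn).2 (by linarith)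
        exact mul_le_mul_of_nonneg_right (Real.rpow_le_rpow_of_exponent_ge ha ha1 hph)
          (by positivity)
    _ = (k - 1) ^ (p - 2) * n ^ (-p) := by
        rw [Real.div_rpow hm.le hn.le, Real.rpow_sub hm, Real.rpow_neg hn.le, Real.rpow_two]
        field_simp

theorem stmt_3_general (H : ℝ → ℝ) (Hmin : ℝ)
    (hrange : ∀ t ∈ Set.Icc (0:ℝ) 1, H t ∈ Set.Ioo (1/2 : ℝ) 1)
    (hmin : IsLeast (H '' Set.Icc (0:ℝ) 1) Hmin) :
    ∃ C > 0, ∀ n : ℕ, 2 ≤ n →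
      ∑ k ∈ Finset.Icc 2 n,
        (((k : ℝ)/(n : ℝ)) ^ H (((k : ℝ) - 1)/(n : ℝ))
          - (((k : ℝ) - 1)/(n : ℝ)) ^ H (((k : ℝ) - 1)/(n : ℝ))) ^ 2
          / ((((k : ℝ) - 1)/(n : ℝ)) ^ H (((k : ℝ) - 1)/(n : ℝ)))
      ≤ C * (n : ℝ) ^ (-Hmin) := by
  have hHmin : Hmin < 1 := by
    obtain ⟨t₀, ht₀, rfl⟩ := hmin.1
    exact (hrange t₀ ht₀).2
  have hsum : Summable fun j : ℕ => (j : ℝ) ^ (Hmin - 2) := Real.summable_nat_rpow.2 (by linarith)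
  refine ⟨∑' j : ℕ, (j : ℝ) ^ (Hmin - 2), hsum.tsum_pos (fun j => by positivity) 1 (by simp),
    fun n _ => ?_⟩
  have hterm : ∀ k ∈ Icc 2 n,
      (((k : ℝ) / n) ^ H (((k : ℝ) - 1) / n) - (((k : ℝ) - 1) / n) ^ H (((k : ℝ) - 1) / n)) ^ 2
          / (((k : ℝ) - 1) / n) ^ H (((k : ℝ) - 1) / n)
        ≤ (((k - 1 : ℕ) : ℝ)) ^ (Hmin - 2) * (n : ℝ) ^ (-Hmin) := by
    intro k hk
    obtain ⟨hk2, hkn⟩ := mem_Icc.1 hk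
    have hk1 : (1 : ℝ) < k := by exact_mod_cast hk2
    have hkn' : (k : ℝ) ≤ n := by exact_mod_cast hkn
    have hgrid : ((k : ℝ) - 1) / n ∈ Set.Icc (0 : ℝ) 1 :=
      ⟨by positivity, (div_le_one (by linarith)).2 (by linarith)⟩
    have hH := hrange _ hgrid
    rw [Nat.cast_sub (by omega), Nat.cast_one]
    exact sq_rpow_div_sub_rpow_pred_div_div_le hk1 hkn' (hmin.2 ⟨_, hgrid, rfl⟩)
      (by linarith [hH.1]) hH.2.le
  calc _ ≤ ∑ k ∈ Icc (1 + 1) n, (((k - 1 : ℕ) : ℝ)) ^ (Hmin - 2) * (n : ℝ) ^ (-Hmin) :=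
        sum_le_sum hterm
    _ ≤ _ := by
        rw [← sum_mul]
        gcongr
        exact sum_Icc_comp_pred_le_tsum hsum (fun j => by positivity) 1 n

/-- For a continuous Hurst function `H` on `[0,1]` taking values in `(1/2,1)`, with minimum
`Hmin` and maximum `Hmax`, there is a constant `C > 0` such that for every `n ≥ 2`,
`∑_{k=2}^{n} (t_k^{H(t_{k-1})} − t_{k-1}^{H(t_{k-1})})² / t_{k-1}^{H(t_{k-1})} ≤ C n^{−Hmin}`,
where `t_k = k/n`. -/
theorem stmt_3 (H : ℝ → ℝ) (Hmin Hmax : ℝ)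
    (hcont : ContinuousOn H (Set.Icc 0 1))
    (hrange : ∀ t ∈ Set.Icc (0:ℝ) 1, H t ∈ Set.Ioo (1/2 : ℝ) 1)
    (hmin : IsLeast (H '' Set.Icc (0:ℝ) 1) Hmin)
    (hmax : IsGreatest (H '' Set.Icc (0:ℝ) 1) Hmax) :
    ∃ C > 0, ∀ n : ℕ, 2 ≤ n →
      ∑ k ∈ Finset.Icc 2 n,
        (((k : ℝ)/(n : ℝ)) ^ H (((k : ℝ) - 1)/(n : ℝ))
          - (((k : ℝ) - 1)/(n : ℝ)) ^ H (((k : ℝ) - 1)/(n : ℝ))) ^ 2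
          / ((((k : ℝ) - 1)/(n : ℝ)) ^ H (((k : ℝ) - 1)/(n : ℝ)))
      ≤ C * (n : ℝ) ^ (-Hmin) :=
  stmt_3_general H Hmin hrange hmin
end

section
/- There exists a constant C' > 0 such that for all t, s ∈ [0,1], E(X_t − X_s)² ≤ |t−s|^{2H_min} + C' |t−s|^{H_min + α} + C' |t−s|^{2α}, where X_t := B^{H(t)}_t. -/
/-!
Split `X_t - X_s = a + b` with `a = B^{H(t)}_t - B^{H(t)}_s` (a fractional increment, of second
moment `|t-s|^{2H(t)} ≤ |t-s|^{2 Hmin}`) and `b = B^{H(t)}_s - B^{H(s)}_s` (a change of the index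
only, of second moment `≤ C C_H² |t-s|^{2α}` by the Hölder continuity of `H`). Weighted Young
`(a+b)² ≤ (1+λ) a² + (1+λ⁻¹) b²` with `λ = |t-s|^{α-Hmin}` turns both cross terms into
multiples of `|t-s|^{Hmin+α}`.
-/

open MeasureTheory Set

lemma add_sq_le_one_add_mul_sq_add_one_add_inv_mul_sq {l : ℝ} (hl : 0 < l) (a b : ℝ) :
    (a + b) ^ 2 ≤ (1 + l) * a ^ 2 + (1 + l⁻¹) * b ^ 2 := by
  have hcross : 2 * (a * b) ≤ l * a ^ 2 + l⁻¹ * b ^ 2 := by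
    have hsq : l * a ^ 2 + l⁻¹ * b ^ 2 - 2 * (a * b) = (l * a - b) ^ 2 / l := by
      field_simp
      ring
    linarith [div_nonneg (sq_nonneg (l * a - b)) hl.le]
  linarith

section Integral

variable {Ω : Type*} [MeasurableSpace Ω] {μ : Measure Ω} {a b : Ω → ℝ}

lemma integral_add_sq_le (ha : MemLp a 2 μ) (hb : MemLp b 2 μ) {l : ℝ} (hl : 0 < l) :
    ∫ ω, (a ω + b ω) ^ 2 ∂μ ≤ (1 + l) * ∫ ω, a ω ^ 2 ∂μ + (1 + l⁻¹) * ∫ ω, b ω ^ 2 ∂μ := by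
  have hia := ha.integrable_sq.const_mul (1 + l)
  have hib := hb.integrable_sq.const_mul (1 + l⁻¹)
  rw [← integral_const_mul, ← integral_const_mul, ← integral_add hia hib]
  exact integral_mono (ha.add hb).integrable_sq (hia.add hib)
    fun ω ↦ add_sq_le_one_add_mul_sq_add_one_add_inv_mul_sq hl (a ω) (b ω)

lemma integral_add_sq_le_rpow (ha : MemLp a 2 μ) (hb : MemLp b 2 μ) {x h α K : ℝ} (hx : 0 < x)
    (ha_le : ∫ ω, a ω ^ 2 ∂μ ≤ x ^ (2 * h)) (hb_le : ∫ ω, b ω ^ 2 ∂μ ≤ K * x ^ (2 * α)) :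
    ∫ ω, (a ω + b ω) ^ 2 ∂μ ≤ x ^ (2 * h) + (1 + K) * x ^ (h + α) + K * x ^ (2 * α) := by
  set l := x ^ (α - h)
  have hl : 0 < l := Real.rpow_pos_of_pos hx _
  have hl_mul : l * x ^ (2 * h) = x ^ (h + α) := by
    rw [← Real.rpow_add hx]; ring_nf
  have hl_inv_mul : l⁻¹ * x ^ (2 * α) = x ^ (h + α) := by
    rw [← Real.rpow_neg hx.le, ← Real.rpow_add hx]; ring_nf
  calc ∫ ω, (a ω + b ω) ^ 2 ∂μ
      ≤ (1 + l) * ∫ ω, a ω ^ 2 ∂μ + (1 + l⁻¹) * ∫ ω, b ω ^ 2 ∂μ := integral_add_sq_le ha hb hl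
    _ ≤ (1 + l) * x ^ (2 * h) + (1 + l⁻¹) * (K * x ^ (2 * α)) := by gcongr
    _ = x ^ (2 * h) + l * x ^ (2 * h) + K * (l⁻¹ * x ^ (2 * α)) + K * x ^ (2 * α) := by ring
    _ = x ^ (2 * h) + (1 + K) * x ^ (h + α) + K * x ^ (2 * α) := by rw [hl_mul, hl_inv_mul]; ring

end Integral

lemma sq_le_mul_rpow_two_mul_of_abs_le {y c x α : ℝ} (hx : 0 ≤ x) (hy : |y| ≤ c * x ^ α) :
    y ^ 2 ≤ c ^ 2 * x ^ (2 * α) := by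
  calc y ^ 2 = |y| ^ 2 := (sq_abs y).symm
    _ ≤ (c * x ^ α) ^ 2 := pow_le_pow_left₀ (abs_nonneg y) hy 2
    _ = c ^ 2 * x ^ (2 * α) := by rw [mul_pow, ← Real.rpow_mul_natCast hx, Nat.cast_ofNat, mul_comm α]

theorem stmt_7_general {Ω : Type*} [MeasurableSpace Ω] (P : Measure Ω)
    (H : ℝ → ℝ) (C_H α Hmin Hmax : ℝ)
    (hmin : IsLeast (H '' Set.Icc (0:ℝ) 1) Hmin)
    (hmax : IsGreatest (H '' Set.Icc (0:ℝ) 1) Hmax)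
    (hHolder : ∀ t ∈ Set.Icc (0:ℝ) 1, ∀ s ∈ Set.Icc (0:ℝ) 1,
      |H t - H s| ≤ C_H * |t - s| ^ α)
    (B : ℝ → ℝ → Ω → ℝ)
    (hL2 : ∀ h ∈ Set.Icc Hmin Hmax, ∀ t ∈ Set.Icc (0:ℝ) 1, MemLp (B h t) 2 P)
    (hfBm : ∀ h ∈ Set.Icc Hmin Hmax, ∀ t ∈ Set.Icc (0:ℝ) 1, ∀ s ∈ Set.Icc (0:ℝ) 1,
      ∫ ω, (B h t ω - B h s ω) ^ 2 ∂P = |t - s| ^ (2 * h))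
    (hB2 : ∃ C > 0, ∀ t ∈ Set.Icc (0:ℝ) 1, ∀ h₁ ∈ Set.Icc Hmin Hmax, ∀ h₂ ∈ Set.Icc Hmin Hmax,
      ∫ ω, (B h₁ t ω - B h₂ t ω) ^ 2 ∂P ≤ C * (h₁ - h₂) ^ 2) :
    ∃ C' > 0, ∀ t ∈ Set.Icc (0:ℝ) 1, ∀ s ∈ Set.Icc (0:ℝ) 1,
      ∫ ω, (B (H t) t ω - B (H s) s ω) ^ 2 ∂P
        ≤ |t - s| ^ (2 * Hmin) + C' * |t - s| ^ (Hmin + α) + C' * |t - s| ^ (2 * α) := by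
  obtain ⟨C, hC, hB⟩ := hB2
  have hH : ∀ t ∈ Icc (0:ℝ) 1, H t ∈ Icc Hmin Hmax :=
    fun t ht ↦ ⟨hmin.2 (mem_image_of_mem H ht), hmax.2 (mem_image_of_mem H ht)⟩
  refine ⟨1 + C * C_H ^ 2, by positivity, fun t ht s hs ↦ ?_⟩
  rcases eq_or_ne t s with rfl | hts
  · simp only [sub_self, ne_eq, OfNat.ofNat_ne_zero, not_false_eq_true, zero_pow,
      integral_zero]
    positivity
  have hx : 0 < |t - s| := abs_pos.mpr (sub_ne_zero.mpr hts)
  have hx1 : |t - s| ≤ 1 := abs_sub_le_of_nonneg_of_le ht.1 ht.2 hs.1 hs.2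
  have hincr : ∫ ω, (B (H t) t ω - B (H t) s ω) ^ 2 ∂P ≤ |t - s| ^ (2 * Hmin) := by
    rw [hfBm (H t) (hH t ht) t ht s hs]
    exact Real.rpow_le_rpow_of_exponent_ge hx hx1 (by linarith [(hH t ht).1])
  have hindex : ∫ ω, (B (H t) s ω - B (H s) s ω) ^ 2 ∂P ≤ C * C_H ^ 2 * |t - s| ^ (2 * α) := by
    calc _ ≤ C * (H t - H s) ^ 2 := hB s hs (H t) (hH t ht) (H s) (hH s hs)
      _ ≤ C * (C_H ^ 2 * |t - s| ^ (2 * α)) := by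
        gcongr; exact sq_le_mul_rpow_two_mul_of_abs_le hx.le (hHolder t ht s hs)
      _ = C * C_H ^ 2 * |t - s| ^ (2 * α) := by ring
  have hsplit := integral_add_sq_le_rpow ((hL2 _ (hH t ht) t ht).sub (hL2 _ (hH t ht) s hs))
    ((hL2 _ (hH t ht) s hs).sub (hL2 _ (hH s hs) s hs)) hx hincr hindex
  simp only [Pi.sub_apply, sub_add_sub_cancel] at hsplit
  have hpow_nonneg : 0 ≤ |t - s| ^ (2 * α) := by positivity
  linarith

/-- Variogram bound for the multifractional Brownian motion `X_t = B^{H(t)}_t`: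
`E(X_t − X_s)² ≤ |t−s|^{2Hmin} + C' |t−s|^{Hmin+α} + C' |t−s|^{2α}`. -/
theorem stmt_7 {Ω : Type*} [MeasurableSpace Ω] (P : Measure Ω) [IsProbabilityMeasure P]
    (H : ℝ → ℝ) (C_H α Hmin Hmax : ℝ)
    (hcont : ContinuousOn H (Set.Icc 0 1))
    (hrange : ∀ t ∈ Set.Icc (0:ℝ) 1, H t ∈ Set.Ioo (1/2 : ℝ) 1)
    (hmin : IsLeast (H '' Set.Icc (0:ℝ) 1) Hmin)
    (hmax : IsGreatest (H '' Set.Icc (0:ℝ) 1) Hmax)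
    (hC_H : 0 < C_H) (hα : α ∈ Set.Ioc (1/2 : ℝ) 1)
    (hHolder : ∀ t ∈ Set.Icc (0:ℝ) 1, ∀ s ∈ Set.Icc (0:ℝ) 1,
      |H t - H s| ≤ C_H * |t - s| ^ α)
    (B : ℝ → ℝ → Ω → ℝ)
    (hL2 : ∀ h ∈ Set.Icc Hmin Hmax, ∀ t ∈ Set.Icc (0:ℝ) 1, MemLp (B h t) 2 P)
    (hfBm : ∀ h ∈ Set.Icc Hmin Hmax, ∀ t ∈ Set.Icc (0:ℝ) 1, ∀ s ∈ Set.Icc (0:ℝ) 1,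
      ∫ ω, (B h t ω - B h s ω) ^ 2 ∂P = |t - s| ^ (2 * h))
    (hB2 : ∃ C > 0, ∀ t ∈ Set.Icc (0:ℝ) 1, ∀ h₁ ∈ Set.Icc Hmin Hmax, ∀ h₂ ∈ Set.Icc Hmin Hmax,
      ∫ ω, (B h₁ t ω - B h₂ t ω) ^ 2 ∂P ≤ C * (h₁ - h₂) ^ 2) :
    ∃ C' > 0, ∀ t ∈ Set.Icc (0:ℝ) 1, ∀ s ∈ Set.Icc (0:ℝ) 1,
      ∫ ω, (B (H t) t ω - B (H s) s ω) ^ 2 ∂P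
        ≤ |t - s| ^ (2 * Hmin) + C' * |t - s| ^ (Hmin + α) + C' * |t - s| ^ (2 * α) :=
  stmt_7_general P H C_H α Hmin Hmax hmin hmax hHolder B hL2 hfBm hB2
end

section
/- There exists a constant C > 0 (depending only on H, C_H, α) such that for all a ∈ ℝ and every integer n ≥ 2, | ∑_{k=2}^{n} ( t_k^{H(t_k)} [φ(a/t_k^{H(t_k)}) − φ(a/t_k^{H(t_{k-1})})] − a [Φ̄(a/t_k^{H(t_k)}) − Φ̄(a/t_k^{H(t_{k-1})})] ) | ≤ C φ(a) n^{1−2α}. -/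
/-!
Fix `k`, put `t = t_k` and let `x = t ^ H(t_k)`, `y = t ^ H(t_{k-1})` lie in `[m, M]`. The map
`τ ↦ x φ(a/τ) - a Φ̄(a/τ)` has derivative `a² φ(a/τ) (x - τ) / τ³`, which vanishes at `τ = x`, so
the `k`-th summand is at most `(M - m)² a² φ(a/M) / m³`. Hölder continuity of `H` gives
`M - m ≤ C_H n^(-α) t^(H_min) |log t|`; since `M² ≤ t`, the Gaussian factor satisfies
`a² φ(a/M) ≤ 2 t / (1 - t) φ(a)`; and `ε |log t| ≤ t^(-ε) (1 - t)`. Hence the summand is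
`O(φ(a) n^(-2α) t^(-β))` with `β < 1`, which is where `2 H_min + 1 - 3 H_max > -1` enters, and
`∑_k t_k^(-β) ≤ n / (1 - β)`.
-/

open Finset MeasureTheory

/-- Standard normal tail probability `P(Y > x)`. -/
noncomputable def Phibar (x : ℝ) : ℝ := ∫ v in Set.Ioi x, phi v

open Real

lemma phi_pos (a : ℝ) : 0 < phi a := by
  unfold phi; positivity

lemma phi_le_phi_of_abs_le {u w : ℝ} (h : |w| ≤ |u|) : phi u ≤ phi w := by
  unfold phi
  gcongr _ * exp ?_
  nlinarith [sq_abs w, sq_abs u, abs_nonneg w]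

lemma continuous_phi : Continuous phi := by
  unfold phi; fun_prop

lemma integrable_phi : Integrable phi := by
  have h := (integrable_exp_neg_mul_sq (b := 1 / 2) (by norm_num)).const_mul (√(2 * π))⁻¹
  refine h.congr (ae_of_all _ fun x => ?_)
  simp only [phi]; ring_nf

lemma phi_div_eq (a M : ℝ) (hM : M ≠ 0) :
    phi (a / M) = phi a * exp (-(a ^ 2 * (1 / M ^ 2 - 1)) / 2) := by
  simp only [phi, mul_assoc, ← exp_add]
  congr 2
  field_simp
  ring

lemma hasDerivAt_phi (x : ℝ) : HasDerivAt phi (-x * phi x) x := by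
  have hexponent : HasDerivAt (fun y : ℝ => -y ^ 2 / 2) (-x) x := by
    refine (((hasDerivAt_pow 2 x).neg).div_const 2).congr_deriv ?_
    push_cast; ring
  exact (hexponent.exp.const_mul (√(2 * π))⁻¹).congr_deriv (by simp only [phi]; ring)

lemma hasDerivAt_Phibar (x : ℝ) : HasDerivAt Phibar (-phi x) x := by
  have hPhibar : ∀ y, Phibar y = Phibar 0 - ∫ v in (0 : ℝ)..y, phi v := fun y => by
    rw [← intervalIntegral.integral_Ioi_sub_Ioi' integrable_phi.integrableOn
      integrable_phi.integrableOn]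
    simp [Phibar]
  rw [show Phibar = fun y => Phibar 0 - ∫ v in (0 : ℝ)..y, phi v from funext hPhibar]
  exact (continuous_phi.integral_hasStrictDerivAt 0 x).hasDerivAt.const_sub _

lemma sq_mul_phi_div_le {a M s : ℝ} (hM : 0 < M) (hMs : M ^ 2 ≤ s) (hs : s < 1) :
    a ^ 2 * phi (a / M) ≤ 2 * s / (1 - s) * phi a := by
  have hs0 : 0 < s := (pow_pos hM 2).trans_le hMs
  set u := (1 - s) / s
  have hu : 0 < u := div_pos (by linarith) hs0
  have huM : u ≤ 1 / M ^ 2 - 1 := by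
    have : 1 / s ≤ 1 / M ^ 2 := one_div_le_one_div_of_le (by positivity) hMs
    simp only [u, sub_div, div_self hs0.ne']; linarith
  have hexp : a ^ 2 * exp (-(a ^ 2 * u) / 2) ≤ 2 / u := by
    have h := mul_exp_neg_le_exp_neg_one (a ^ 2 * u / 2)
    rw [le_div_iff₀ hu]
    have : exp (-1) ≤ 1 := exp_le_one_iff.2 (by norm_num)
    rw [neg_div] at *
    nlinarith
  calc a ^ 2 * phi (a / M) = phi a * (a ^ 2 * exp (-(a ^ 2 * (1 / M ^ 2 - 1)) / 2)) := by
        rw [phi_div_eq a M hM.ne']; ring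
    _ ≤ phi a * (a ^ 2 * exp (-(a ^ 2 * u) / 2)) :=
        mul_le_mul_of_nonneg_left (by gcongr) (phi_pos a).le
    _ ≤ phi a * (2 / u) := mul_le_mul_of_nonneg_left hexp (phi_pos a).le
    _ = 2 * s / (1 - s) * phi a := by
        simp only [u]; field_simp

noncomputable def phiIncrement (a x y : ℝ) : ℝ :=
  x * (phi (a / x) - phi (a / y)) - a * (Phibar (a / x) - Phibar (a / y))

lemma hasDerivAt_mul_phi_div_sub_mul_Phibar_div (a x : ℝ) {τ : ℝ} (hτ : τ ≠ 0) :
    HasDerivAt (fun τ => x * phi (a / τ) - a * Phibar (a / τ))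
      (a ^ 2 * phi (a / τ) * (x - τ) / τ ^ 3) τ := by
  have hdiv : HasDerivAt (fun τ => a / τ) (-a / τ ^ 2) τ := by
    simpa [div_eq_mul_inv, neg_div] using (hasDerivAt_inv hτ).const_mul a
  have hphi := (hasDerivAt_phi (a / τ)).comp τ hdiv
  have hPhibar := (hasDerivAt_Phibar (a / τ)).comp τ hdiv
  refine ((hphi.const_mul x).sub (hPhibar.const_mul a)).congr_deriv ?_
  field_simp

lemma abs_phiIncrement_le {a m M x y : ℝ} (hm : 0 < m) (hx : x ∈ Set.Icc m M)
    (hy : y ∈ Set.Icc m M) :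
    |phiIncrement a x y| ≤ (M - m) ^ 2 * a ^ 2 * phi (a / M) / m ^ 3 := by
  have hmM : 0 ≤ M - m := sub_nonneg.2 (hx.1.trans hx.2)
  have hphiM := phi_pos (a / M)
  have hderiv_le : ∀ τ ∈ Set.Icc m M, ‖a ^ 2 * phi (a / τ) * (x - τ) / τ ^ 3‖
      ≤ a ^ 2 * phi (a / M) * (M - m) / m ^ 3 := by
    intro τ hτ
    have hτ0 : 0 < τ := hm.trans_le hτ.1
    have hphi : phi (a / τ) ≤ phi (a / M) := by
      apply phi_le_phi_of_abs_le
      rw [abs_div, abs_div, abs_of_pos hτ0, abs_of_pos (hτ0.trans_le hτ.2)]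
      exact div_le_div_of_nonneg_left (abs_nonneg a) hτ0 hτ.2
    have hxτ : |x - τ| ≤ M - m := abs_sub_le_of_le_of_le hx.1 hx.2 hτ.1 hτ.2
    rw [Real.norm_eq_abs, abs_div, abs_mul, abs_mul, abs_of_nonneg (sq_nonneg a),
      abs_of_pos (phi_pos _), abs_of_pos (pow_pos hτ0 3)]
    gcongr
    exact hτ.1
  have hmvt := (convex_Icc m M).norm_image_sub_le_of_norm_hasDerivWithin_le
    (fun τ hτ => (hasDerivAt_mul_phi_div_sub_mul_Phibar_div a x
      (hm.trans_le hτ.1).ne').hasDerivWithinAt) hderiv_le hy hx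
  have hxy : ‖x - y‖ ≤ M - m := abs_sub_le_of_le_of_le hx.1 hx.2 hy.1 hy.2
  calc |phiIncrement a x y| = ‖(x * phi (a / x) - a * Phibar (a / x))
        - (x * phi (a / y) - a * Phibar (a / y))‖ := by
        rw [Real.norm_eq_abs, phiIncrement]; ring_nf
    _ ≤ a ^ 2 * phi (a / M) * (M - m) / m ^ 3 * (M - m) :=
        hmvt.trans (mul_le_mul_of_nonneg_left hxy (by positivity))
    _ = (M - m) ^ 2 * a ^ 2 * phi (a / M) / m ^ 3 := by ring

lemma mul_neg_log_le_rpow_neg_mul {t ε : ℝ} (ht0 : 0 < t) (ht1 : t ≤ 1) (hε1 : ε ≤ 1) :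
    ε * -log t ≤ t ^ (-ε) * (1 - t) := by
  have hlog : ε * -log t ≤ t ^ (-ε) - 1 := by
    have := log_le_sub_one_of_pos (rpow_pos_of_pos ht0 (-ε))
    rwa [log_rpow ht0, neg_mul, ← mul_neg] at this
  have ht_le : t ≤ t ^ ε := by
    simpa using rpow_le_rpow_of_exponent_ge ht0 ht1 hε1
  have hprod : t ^ (-ε) * t ^ ε = 1 := by
    rw [← rpow_add ht0, neg_add_cancel, rpow_zero]
  nlinarith [rpow_pos_of_pos ht0 (-ε)]

lemma abs_rpow_sub_rpow_le {t p h₁ h₂ : ℝ} (ht0 : 0 < t) (ht1 : t ≤ 1) (h₁p : p ≤ h₁)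
    (h₂p : p ≤ h₂) : |t ^ h₁ - t ^ h₂| ≤ t ^ p * -log t * |h₁ - h₂| := by
  have hderiv : ∀ h ∈ Set.Ici p, ‖t ^ h * log t‖ ≤ t ^ p * -log t := by
    intro h hh
    rw [Real.norm_eq_abs, abs_mul, abs_of_pos (rpow_pos_of_pos ht0 h),
      abs_of_nonpos (log_nonpos ht0.le ht1)]
    exact mul_le_mul_of_nonneg_right (rpow_le_rpow_of_exponent_ge ht0 ht1 hh)
      (neg_nonneg.2 (log_nonpos ht0.le ht1))
  exact (convex_Ici p).norm_image_sub_le_of_norm_hasDerivWithin_le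
    (fun h _ => (hasStrictDerivAt_const_rpow ht0 h).hasDerivAt.hasDerivWithinAt)
    hderiv h₂p h₁p

lemma abs_phiIncrement_rpow_le (a : ℝ) {t p q h₁ h₂ ε : ℝ} (ht0 : 0 < t) (ht1 : t ≤ 1)
    (hp : 1 / 2 ≤ p) (h₁pq : h₁ ∈ Set.Icc p q) (h₂pq : h₂ ∈ Set.Icc p q) (hε0 : 0 < ε)
    (hε1 : ε ≤ 1) :
    |phiIncrement a (t ^ h₁) (t ^ h₂)|
      ≤ 2 * (h₁ - h₂) ^ 2 / ε ^ 2 * t ^ (2 * p + 1 - 3 * q - 2 * ε) * phi a := by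
  rcases ht1.eq_or_lt with rfl | ht1
  · simp only [one_rpow, phiIncrement, sub_self, mul_zero, abs_zero]
    have := phi_pos a
    positivity
  set L := -log t
  have hL : 0 ≤ L := neg_nonneg.2 (log_nonpos ht0.le ht1.le)
  set M := max (t ^ h₁) (t ^ h₂)
  set m := min (t ^ h₁) (t ^ h₂)
  have hm : t ^ q ≤ m := le_min (rpow_le_rpow_of_exponent_ge ht0 ht1.le h₁pq.2)
    (rpow_le_rpow_of_exponent_ge ht0 ht1.le h₂pq.2)
  have hM : M ≤ t ^ p := max_le (rpow_le_rpow_of_exponent_ge ht0 ht1.le h₁pq.1)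
    (rpow_le_rpow_of_exponent_ge ht0 ht1.le h₂pq.1)
  have hM0 : 0 < M := lt_max_of_lt_left (rpow_pos_of_pos ht0 _)
  have hMm : M - m ≤ t ^ p * L * |h₁ - h₂| := by
    rw [max_sub_min_eq_abs']
    exact abs_rpow_sub_rpow_le ht0 ht1.le h₁pq.1 h₂pq.1
  have hM2 : M ^ 2 ≤ t := by
    calc M ^ 2 ≤ (t ^ p) ^ 2 := pow_le_pow_left₀ hM0.le hM 2
      _ = t ^ (2 * p) := by rw [← rpow_natCast, ← rpow_mul ht0.le]; ring_nf
      _ ≤ t := by simpa using rpow_le_rpow_of_exponent_ge ht0 ht1.le (by linarith : 1 ≤ 2 * p)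
  have hL2 : L ^ 2 / (1 - t) ≤ (t ^ (-ε)) ^ 2 / ε ^ 2 := by
    have hεL : (ε * L) ^ 2 ≤ (t ^ (-ε) * (1 - t)) ^ 2 :=
      pow_le_pow_left₀ (by positivity) (mul_neg_log_le_rpow_neg_mul ht0 ht1.le hε1) 2
    rw [div_le_div_iff₀ (by linarith) (by positivity)]
    nlinarith [pow_pos (rpow_pos_of_pos ht0 (-ε)) 2]
  have hpow : (t ^ p) ^ 2 * t / (t ^ q) ^ 3 * (t ^ (-ε)) ^ 2
      = t ^ (2 * p + 1 - 3 * q - 2 * ε) := by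
    rw [show 2 * p + 1 - 3 * q - 2 * ε = p * (2 : ℕ) + 1 - q * (3 : ℕ) + -ε * (2 : ℕ) by
        push_cast; ring, rpow_add ht0, rpow_sub ht0, rpow_add ht0, rpow_one,
      rpow_mul_natCast ht0.le, rpow_mul_natCast ht0.le, rpow_mul_natCast ht0.le]
  have hphi_a := phi_pos a
  calc |phiIncrement a (t ^ h₁) (t ^ h₂)|
      ≤ (M - m) ^ 2 * (a ^ 2 * phi (a / M)) / m ^ 3 := by
        rw [← mul_assoc]
        exact abs_phiIncrement_le ((rpow_pos_of_pos ht0 q).trans_le hm)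
          ⟨min_le_left _ _, le_max_left _ _⟩ ⟨min_le_right _ _, le_max_right _ _⟩
    _ ≤ (t ^ p * L * |h₁ - h₂|) ^ 2 * (2 * t / (1 - t) * phi a) / (t ^ q) ^ 3 := by
        have hmM : 0 ≤ M - m := sub_nonneg.2 min_le_max
        have hphiM := phi_pos (a / M)
        gcongr ?_ ^ 2 * ?_ / ?_ ^ 3
        exact sq_mul_phi_div_le hM0 hM2 ht1
    _ = 2 * (h₁ - h₂) ^ 2 * phi a * ((t ^ p) ^ 2 * t / (t ^ q) ^ 3) * (L ^ 2 / (1 - t)) := by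
        rw [mul_pow _ |h₁ - h₂|, sq_abs]; ring
    _ ≤ 2 * (h₁ - h₂) ^ 2 * phi a * ((t ^ p) ^ 2 * t / (t ^ q) ^ 3)
          * ((t ^ (-ε)) ^ 2 / ε ^ 2) := by
        gcongr
    _ = 2 * (h₁ - h₂) ^ 2 / ε ^ 2 * t ^ (2 * p + 1 - 3 * q - 2 * ε) * phi a := by
        rw [← hpow]; ring

lemma mul_rpow_sub_one_mul_le_rpow_sub_rpow {u d r : ℝ} (hu : 0 < u) (hdu : d ≤ u)
    (hr0 : 0 ≤ r) (hr1 : r ≤ 1) : r * u ^ (r - 1) * d ≤ u ^ r - (u - d) ^ r := by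
  have hbernoulli := rpow_one_add_le_one_add_mul_self (s := -(d / u))
    (by rw [neg_le_neg_iff, div_le_one hu]; exact hdu) hr0 hr1
  have hsplit : (u - d) ^ r = u ^ r * (1 + -(d / u)) ^ r := by
    rw [← mul_rpow hu.le (by rw [← sub_eq_add_neg, sub_nonneg, div_le_one hu]; exact hdu)]
    congr 1; field_simp; ring
  have hur : u ^ (r - 1) = u ^ r / u := rpow_sub_one hu.ne' r
  rw [hsplit, hur]
  have := rpow_pos_of_pos hu r
  calc r * (u ^ r / u) * d = u ^ r * (1 - (1 + r * -(d / u))) := by field_simp; ring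
    _ ≤ u ^ r * (1 - (1 + -(d / u)) ^ r) := by gcongr
    _ = u ^ r - u ^ r * (1 + -(d / u)) ^ r := by ring

lemma sum_Icc_div_rpow_neg_le {β : ℝ} (hβ0 : 0 ≤ β) (hβ1 : β < 1) (n : ℕ) :
    ∑ k ∈ Icc 1 n, ((k : ℝ) / n) ^ (-β) ≤ n / (1 - β) := by
  set g : ℕ → ℝ := fun k => ((k : ℝ) / n) ^ (1 - β)
  have hβ : 0 < 1 - β := by linarith
  have hterm : ∀ k ∈ Icc 1 n, ((k : ℝ) / n) ^ (-β) ≤ n / (1 - β) * (g k - g (k - 1)) := by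
    intro k hk
    obtain ⟨hk1, hkn⟩ := mem_Icc.1 hk
    have hn : (0 : ℝ) < n := by exact_mod_cast hk1.trans hkn
    have hk : (0 : ℝ) < k := by exact_mod_cast hk1
    have := mul_rpow_sub_one_mul_le_rpow_sub_rpow (d := 1 / n) (div_pos hk hn)
      (div_le_div_of_nonneg_right (by exact_mod_cast hk1) hn.le) hβ.le (by linarith)
    rw [sub_sub_cancel_left, ← sub_div] at this
    simp only [g, Nat.cast_sub hk1, Nat.cast_one]
    rw [div_mul_eq_mul_div, le_div_iff₀ hβ]
    calc ((k : ℝ) / n) ^ (-β) * (1 - β) = n * ((1 - β) * ((k : ℝ) / n) ^ (-β) * (1 / n)) := by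
          field_simp
      _ ≤ n * (((k : ℝ) / n) ^ (1 - β) - (((k : ℝ) - 1) / n) ^ (1 - β)) := by gcongr
  have htelescope : ∑ k ∈ Icc 1 n, (g k - g (k - 1)) = g n - g 0 := by
    rw [← Finset.Ico_add_one_right_eq_Icc, Finset.sum_Ico_eq_sum_range]
    simpa [add_comm 1] using Finset.sum_range_sub g n
  have hgn : g n - g 0 ≤ 1 := by
    rcases n.eq_zero_or_pos with rfl | hn
    · simp [g]
    · simp [g, div_self ((Nat.cast_pos (α := ℝ)).2 hn).ne', zero_rpow hβ.ne']
  calc ∑ k ∈ Icc 1 n, ((k : ℝ) / n) ^ (-β) ≤ ∑ k ∈ Icc 1 n, n / (1 - β) * (g k - g (k - 1)) :=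
        sum_le_sum hterm
    _ = n / (1 - β) * (g n - g 0) := by rw [← mul_sum, htelescope]
    _ ≤ n / (1 - β) := mul_le_of_le_one_right (by positivity) hgn

lemma abs_phiIncrement_grid_le {H : ℝ → ℝ} {C_H α p q ε β : ℝ} (hp : 1 / 2 ≤ p)
    (hH : ∀ t ∈ Set.Icc (0 : ℝ) 1, H t ∈ Set.Icc p q)
    (hHolder : ∀ t ∈ Set.Icc (0 : ℝ) 1, ∀ s ∈ Set.Icc (0 : ℝ) 1,
      |H t - H s| ≤ C_H * |t - s| ^ α)
    (hε0 : 0 < ε) (hε1 : ε ≤ 1) (hβ : -β ≤ 2 * p + 1 - 3 * q - 2 * ε)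
    (a : ℝ) {n k : ℕ} (hk1 : 1 ≤ k) (hkn : k ≤ n) :
    |phiIncrement a (((k : ℝ) / n) ^ H ((k : ℝ) / n)) (((k : ℝ) / n) ^ H (((k : ℝ) - 1) / n))|
      ≤ 2 * (C_H * (n : ℝ) ^ (-α)) ^ 2 / ε ^ 2 * ((k : ℝ) / n) ^ (-β) * phi a := by
  have hn : (0 : ℝ) < n := by exact_mod_cast hk1.trans hkn
  have hk : (1 : ℝ) ≤ k := by exact_mod_cast hk1
  have hkn' : (k : ℝ) ≤ n := by exact_mod_cast hkn
  have ht : (k : ℝ) / n ∈ Set.Icc (0 : ℝ) 1 := ⟨by positivity, div_le_one_of_le₀ hkn' hn.le⟩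
  have hs : ((k : ℝ) - 1) / n ∈ Set.Icc (0 : ℝ) 1 :=
    ⟨div_nonneg (by linarith) hn.le, div_le_one_of_le₀ (by linarith) hn.le⟩
  have hΔ : (H ((k : ℝ) / n) - H (((k : ℝ) - 1) / n)) ^ 2 ≤ (C_H * (n : ℝ) ^ (-α)) ^ 2 := by
    have h := hHolder _ ht _ hs
    rw [← sub_div, sub_sub_cancel, abs_of_pos (one_div_pos.2 hn), one_div,
      inv_rpow hn.le, ← rpow_neg hn.le] at h
    rw [← sq_abs]
    exact pow_le_pow_left₀ (abs_nonneg _) h 2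
  have hphi := phi_pos a
  calc _ ≤ 2 * (H ((k : ℝ) / n) - H (((k : ℝ) - 1) / n)) ^ 2 / ε ^ 2
        * ((k : ℝ) / n) ^ (2 * p + 1 - 3 * q - 2 * ε) * phi a :=
        abs_phiIncrement_rpow_le a (by positivity) ht.2 hp (hH _ ht) (hH _ hs) hε0 hε1
    _ ≤ _ := by
        gcongr 2 * ?_ / _ * ?_ * _
        exact rpow_le_rpow_of_exponent_ge (by positivity) ht.2 hβ

lemma abs_sum_phiIncrement_grid_le {H : ℝ → ℝ} {C_H α p q ε β : ℝ} (hp : 1 / 2 ≤ p)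
    (hH : ∀ t ∈ Set.Icc (0 : ℝ) 1, H t ∈ Set.Icc p q)
    (hHolder : ∀ t ∈ Set.Icc (0 : ℝ) 1, ∀ s ∈ Set.Icc (0 : ℝ) 1,
      |H t - H s| ≤ C_H * |t - s| ^ α)
    (hε0 : 0 < ε) (hε1 : ε ≤ 1) (hβ0 : 0 ≤ β) (hβ1 : β < 1)
    (hβ : -β ≤ 2 * p + 1 - 3 * q - 2 * ε) (a : ℝ) (n : ℕ) :
    |∑ k ∈ Icc 2 n, phiIncrement a (((k : ℝ) / n) ^ H ((k : ℝ) / n))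
        (((k : ℝ) / n) ^ H (((k : ℝ) - 1) / n))|
      ≤ 2 * (C_H * (n : ℝ) ^ (-α)) ^ 2 / ε ^ 2 * (n / (1 - β)) * phi a := by
  set c := 2 * (C_H * (n : ℝ) ^ (-α)) ^ 2 / ε ^ 2
  have hphi := phi_pos a
  calc _ ≤ ∑ k ∈ Icc 2 n, |phiIncrement a (((k : ℝ) / n) ^ H ((k : ℝ) / n))
          (((k : ℝ) / n) ^ H (((k : ℝ) - 1) / n))| := abs_sum_le_sum_abs _ _
    _ ≤ ∑ k ∈ Icc 2 n, c * ((k : ℝ) / n) ^ (-β) * phi a := by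
        refine sum_le_sum fun k hk => ?_
        obtain ⟨hk2, hkn⟩ := mem_Icc.1 hk
        exact abs_phiIncrement_grid_le hp hH hHolder hε0 hε1 hβ a (one_le_two.trans hk2) hkn
    _ ≤ ∑ k ∈ Icc 1 n, c * ((k : ℝ) / n) ^ (-β) * phi a :=
        sum_le_sum_of_subset_of_nonneg (Icc_subset_Icc_left one_le_two)
          fun _ _ _ => by positivity
    _ = c * (∑ k ∈ Icc 1 n, ((k : ℝ) / n) ^ (-β)) * phi a := by
        rw [← sum_mul, ← mul_sum]
    _ ≤ c * (n / (1 - β)) * phi a := by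
        gcongr
        exact sum_Icc_div_rpow_neg_le hβ0 hβ1 n

theorem stmt_19_general (H : ℝ → ℝ) (C_H α Hmin Hmax : ℝ)
    (hrange : ∀ t ∈ Set.Icc (0:ℝ) 1, H t ∈ Set.Ioo (1/2 : ℝ) 1)
    (hmin : IsLeast (H '' Set.Icc (0:ℝ) 1) Hmin)
    (hmax : IsGreatest (H '' Set.Icc (0:ℝ) 1) Hmax)
    (hC_H : 0 < C_H)
    (hHolder : ∀ t ∈ Set.Icc (0:ℝ) 1, ∀ s ∈ Set.Icc (0:ℝ) 1,
      |H t - H s| ≤ C_H * |t - s| ^ α) :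
    ∃ C > 0, ∀ a : ℝ, ∀ n : ℕ, 2 ≤ n →
      |∑ k ∈ Finset.Icc 2 n,
        (((k : ℝ)/(n : ℝ)) ^ H ((k : ℝ)/(n : ℝ))
            * (phi (a / ((k : ℝ)/(n : ℝ)) ^ H ((k : ℝ)/(n : ℝ)))
               - phi (a / ((k : ℝ)/(n : ℝ)) ^ H (((k : ℝ) - 1)/(n : ℝ))))
          - a * (Phibar (a / ((k : ℝ)/(n : ℝ)) ^ H ((k : ℝ)/(n : ℝ)))
               - Phibar (a / ((k : ℝ)/(n : ℝ)) ^ H (((k : ℝ) - 1)/(n : ℝ)))))|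
      ≤ C * phi a * (n : ℝ) ^ (1 - 2 * α) := by
  obtain ⟨⟨t₀, ht₀, rfl⟩, hlower⟩ := hmin
  obtain ⟨⟨t₁, ht₁, rfl⟩, hupper⟩ := hmax
  have hH : ∀ t ∈ Set.Icc (0 : ℝ) 1, H t ∈ Set.Icc (H t₀) (H t₁) :=
    fun t ht => ⟨hlower ⟨t, ht, rfl⟩, hupper ⟨t, ht, rfl⟩⟩
  have hp := (hrange t₀ ht₀).1
  have hq := (hrange t₁ ht₁).2
  set γ := min 1 (2 * H t₀ + 2 - 3 * H t₁)
  have hγ : 0 < γ := lt_min one_pos (by linarith)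
  have hγ1 : γ ≤ 1 := min_le_left _ _
  have hγp : γ ≤ 2 * H t₀ + 2 - 3 * H t₁ := min_le_right _ _
  refine ⟨64 * C_H ^ 2 / γ ^ 3, by positivity, fun a n hn => ?_⟩
  have hn0 : (0 : ℝ) < n := by positivity
  have hpow : ((n : ℝ) ^ (-α)) ^ 2 * n = (n : ℝ) ^ (1 - 2 * α) := by
    rw [← rpow_natCast, ← rpow_mul hn0.le, ← rpow_add_one hn0.ne']; ring_nf
  calc _ ≤ 2 * (C_H * (n : ℝ) ^ (-α)) ^ 2 / (γ / 4) ^ 2 * (n / (1 - (1 - γ / 2))) * phi a :=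
        abs_sum_phiIncrement_grid_le hp.le hH hHolder (by positivity) (by linarith)
          (by linarith) (by linarith) (by linarith) a n
    _ = 64 * C_H ^ 2 / γ ^ 3 * phi a * (n : ℝ) ^ (1 - 2 * α) := by
        rw [← hpow]; field_simp [hγ.ne']; ring

/-- Lemma: for all `a ∈ ℝ` and `n ≥ 2`,
`|∑_{k=2}^{n} (t_k^{H(t_k)} [φ(a/t_k^{H(t_k)}) − φ(a/t_k^{H(t_{k-1})})]
− a [Φ̄(a/t_k^{H(t_k)}) − Φ̄(a/t_k^{H(t_{k-1})})])| ≤ C φ(a) n^{1−2α}`. -/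
theorem stmt_19 (H : ℝ → ℝ) (C_H α Hmin Hmax : ℝ)
    (hcont : ContinuousOn H (Set.Icc 0 1))
    (hrange : ∀ t ∈ Set.Icc (0:ℝ) 1, H t ∈ Set.Ioo (1/2 : ℝ) 1)
    (hmin : IsLeast (H '' Set.Icc (0:ℝ) 1) Hmin)
    (hmax : IsGreatest (H '' Set.Icc (0:ℝ) 1) Hmax)
    (hC_H : 0 < C_H) (hα : α ∈ Set.Ioc (1/2 : ℝ) 1)
    (hHolder : ∀ t ∈ Set.Icc (0:ℝ) 1, ∀ s ∈ Set.Icc (0:ℝ) 1,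
      |H t - H s| ≤ C_H * |t - s| ^ α) :
    ∃ C > 0, ∀ a : ℝ, ∀ n : ℕ, 2 ≤ n →
      |∑ k ∈ Finset.Icc 2 n,
        (((k : ℝ)/(n : ℝ)) ^ H ((k : ℝ)/(n : ℝ))
            * (phi (a / ((k : ℝ)/(n : ℝ)) ^ H ((k : ℝ)/(n : ℝ)))
               - phi (a / ((k : ℝ)/(n : ℝ)) ^ H (((k : ℝ) - 1)/(n : ℝ))))
          - a * (Phibar (a / ((k : ℝ)/(n : ℝ)) ^ H ((k : ℝ)/(n : ℝ)))
               - Phibar (a / ((k : ℝ)/(n : ℝ)) ^ H (((k : ℝ) - 1)/(n : ℝ)))))|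
      ≤ C * phi a * (n : ℝ) ^ (1 - 2 * α) :=
  stmt_19_general H C_H α Hmin Hmax hrange hmin hmax hC_H hHolder
end
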